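/- For every n ≥ 1, the coefficient of u^1 (the degree-1 part in u) of the Markov–Fibonacci numerator Q_n equals Σ_{k=1}^{n} k·v^{k−1}·w^{n−k}; equivalently, A_{1,j}(n) = j + 1 for 0 ≤ j ≤ n−1. -/

import Mathlib

open MvPolynomial

/-- The Markov–Fibonacci numerator polynomials `Q n ∈ ℤ[u,v,w]` (with `u = X 0`,
`v = X 1`, `w = X 2`), defined by `Q 0 = 1`, `Q 1 = u + v` and
`Q (n+2) = (u+v+w)·Q (n+1) - v·w·Q n`. `Q n` is the numerator of the Markov
polynomial `M_{1/n}`. -/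
noncomputable def Q : ℕ → MvPolynomial (Fin 3) ℤ
  | 0 => 1
  | 1 => X 0 + X 1
  | (n + 2) => (X 0 + X 1 + X 2) * Q (n + 1) - X 1 * X 2 * Q n

/-- Shorthand for the exponent vector `u^a v^b w^c`. -/
noncomputable def mono (a b c : ℕ) : Fin 3 →₀ ℕ :=
  Finsupp.single 0 a + Finsupp.single 1 b + Finsupp.single 2 c

lemma mono_apply0 (a b c : ℕ) : mono a b c 0 = a := by
  simp [mono, Finsupp.single_apply]

lemma mono_apply1 (a b c : ℕ) : mono a b c 1 = b := by
  simp [mono, Finsupp.single_apply]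

lemma mono_apply2 (a b c : ℕ) : mono a b c 2 = c := by
  simp [mono, Finsupp.single_apply]

lemma mono_eq_iff {a b c a' b' c' : ℕ} :
    mono a b c = mono a' b' c' ↔ a = a' ∧ b = b' ∧ c = c' := by
  constructor
  · intro h
    refine ⟨?_, ?_, ?_⟩
    · have := DFunLike.congr_fun h 0; simpa [mono_apply0] using this
    · have := DFunLike.congr_fun h 1; simpa [mono_apply1] using this
    · have := DFunLike.congr_fun h 2; simpa [mono_apply2] using this
  · rintro ⟨rfl, rfl, rfl⟩; rfl

lemma mono_succ0 (a b c : ℕ) : mono (a + 1) b c = Finsupp.single 0 1 + mono a b c := by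
  simp only [mono, Finsupp.single_add]; abel

lemma mono_succ1 (a b c : ℕ) : mono a (b + 1) c = Finsupp.single 1 1 + mono a b c := by
  simp only [mono, Finsupp.single_add]; abel

lemma mono_succ2 (a b c : ℕ) : mono a b (c + 1) = Finsupp.single 2 1 + mono a b c := by
  simp only [mono, Finsupp.single_add]; abel

lemma zero_eq_mono : (0 : Fin 3 →₀ ℕ) = mono 0 0 0 := by simp [mono]

lemma singleX0_eq_mono : (Finsupp.single 0 1 : Fin 3 →₀ ℕ) = mono 1 0 0 := by simp [mono]

lemma singleX1_eq_mono : (Finsupp.single 1 1 : Fin 3 →₀ ℕ) = mono 0 1 0 := by simp [mono]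

lemma cX0 (p : MvPolynomial (Fin 3) ℤ) (a b c : ℕ) :
    coeff (mono (a + 1) b c) (X 0 * p) = coeff (mono a b c) p := by
  rw [mono_succ0, coeff_X_mul]

lemma cX0' (p : MvPolynomial (Fin 3) ℤ) (b c : ℕ) :
    coeff (mono 0 b c) (X 0 * p) = 0 := by
  rw [coeff_X_mul', if_neg]
  simp [Finsupp.mem_support_iff, mono_apply0]

lemma cX1 (p : MvPolynomial (Fin 3) ℤ) (a b c : ℕ) :
    coeff (mono a (b + 1) c) (X 1 * p) = coeff (mono a b c) p := by
  rw [mono_succ1, coeff_X_mul]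

lemma cX1' (p : MvPolynomial (Fin 3) ℤ) (a c : ℕ) :
    coeff (mono a 0 c) (X 1 * p) = 0 := by
  rw [coeff_X_mul', if_neg]
  simp [Finsupp.mem_support_iff, mono_apply1]

lemma cX2 (p : MvPolynomial (Fin 3) ℤ) (a b c : ℕ) :
    coeff (mono a b (c + 1)) (X 2 * p) = coeff (mono a b c) p := by
  rw [mono_succ2, coeff_X_mul]

lemma cX2' (p : MvPolynomial (Fin 3) ℤ) (a b : ℕ) :
    coeff (mono a b 0) (X 2 * p) = 0 := by
  rw [coeff_X_mul', if_neg]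
  simp [Finsupp.mem_support_iff, mono_apply2]

lemma cX0one (p : MvPolynomial (Fin 3) ℤ) (b c : ℕ) :
    coeff (mono 1 b c) (X 0 * p) = coeff (mono 0 b c) p :=
  cX0 p 0 b c

lemma coeff_step (p q : MvPolynomial (Fin 3) ℤ) (m : Fin 3 →₀ ℕ) :
    coeff m ((X 0 + X 1 + X 2) * p - X 1 * X 2 * q)
      = coeff m (X 0 * p) + coeff m (X 1 * p) + coeff m (X 2 * p)
        - coeff m (X 1 * (X 2 * q)) := by
  rw [coeff_sub, mul_assoc]
  congr 1
  rw [add_mul, add_mul, coeff_add, coeff_add]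

lemma L0 : ∀ n b c, coeff (mono 0 b c) (Q n) = if b = n ∧ c = 0 then 1 else 0 := by
  intro n
  induction n using Nat.twoStepInduction with
  | zero =>
    intro b c
    rw [show Q 0 = 1 from rfl, coeff_one]
    simp only [zero_eq_mono, mono_eq_iff]
    split_ifs <;> (try simp_all) <;> omega
  | one =>
    intro b c
    rw [show Q 1 = X 0 + X 1 from rfl, coeff_add, coeff_X', coeff_X']
    simp only [singleX0_eq_mono, singleX1_eq_mono, mono_eq_iff]
    split_ifs <;> (try simp only [true_and, false_and] at *) <;> omega
  | more n ih ih1 =>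
    intro b c
    rw [show Q (n + 2) = (X 0 + X 1 + X 2) * Q (n + 1) - X 1 * X 2 * Q n from rfl,
      coeff_step, cX0']
    rcases b with _ | b <;> rcases c with _ | c
    · rw [cX1', cX2', cX1']
      split_ifs <;> (try simp_all) <;> omega
    · rw [cX1', cX2, cX1', ih1]
      split_ifs <;> (try simp_all) <;> omega
    · rw [cX1, cX2', ih1, cX1, cX2']
      split_ifs <;> (try simp_all) <;> omega
    · rw [cX1, cX2, cX1, cX2, ih1, ih1, ih]
      split_ifs <;> (try simp_all) <;> omega

lemma L1 : ∀ n b c, coeff (mono 1 b c) (Q n) = if b + c + 1 = n then (b : ℤ) + 1 else 0 := by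
  intro n
  induction n using Nat.twoStepInduction with
  | zero =>
    intro b c
    rw [show Q 0 = 1 from rfl, coeff_one]
    simp only [zero_eq_mono, mono_eq_iff]
    split_ifs <;> (try simp_all) <;> omega
  | one =>
    intro b c
    rw [show Q 1 = X 0 + X 1 from rfl, coeff_add, coeff_X', coeff_X']
    simp only [singleX0_eq_mono, singleX1_eq_mono, mono_eq_iff]
    split_ifs <;> (try simp_all) <;> omega
  | more n ih ih1 =>
    intro b c
    rw [show Q (n + 2) = (X 0 + X 1 + X 2) * Q (n + 1) - X 1 * X 2 * Q n from rfl,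
      coeff_step, cX0one, L0]
    rcases b with _ | b <;> rcases c with _ | c
    · rw [cX1', cX2', cX1']
      split_ifs <;> (try simp_all) <;> omega
    · rw [cX1', cX2, cX1', ih1]
      split_ifs <;> (try simp_all) <;> omega
    · rw [cX1, cX2', ih1, cX1, cX2']
      split_ifs <;> (try simp_all) <;> omega
    · rw [cX1, cX2, cX1, cX2, ih1, ih1, ih]
      split_ifs <;> (try simp_all) <;> omega

/-- The degree-1 part in `u` of the Markov–Fibonacci numerator `Q n` equals
`Σ_{k=1}^{n} k·v^(k-1)·w^(n-k)`; equivalently `A_{1,j}(n) = j + 1` for `0 ≤ j ≤ n-1`. -/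
theorem fibonacci_numerator_u1 (n : ℕ) (hn : 1 ≤ n) (j : ℕ) (hj : j ≤ n - 1) :
    MvPolynomial.coeff
        (Finsupp.single 0 1 + Finsupp.single 1 j + Finsupp.single 2 (n - 1 - j)) (Q n)
      = (j : ℤ) + 1 := by
  have := L1 n j (n - 1 - j)
  rw [show (Finsupp.single 0 1 + Finsupp.single 1 j + Finsupp.single 2 (n - 1 - j)
      : Fin 3 →₀ ℕ) = mono 1 j (n - 1 - j) from rfl, this, if_pos (by omega)]
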